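/- No circle-center set is in general position: if S ⊆ ℝ² is not contained in any affine line and contains its circle centers, then S contains three distinct points that are collinear. -/

import Mathlib

open Real EuclideanGeometry

/-- A set in the Euclidean plane contains its circle centers if, whenever it contains
three non-collinear points, it contains the point equidistant from all three
(the circumcenter of the triangle they form). -/
def ContainsCircleCenters (S : Set (EuclideanSpace ℝ (Fin 2))) : Prop :=
  ∀ A ∈ S, ∀ B ∈ S, ∀ C ∈ S,
    ¬ Collinear ℝ ({A, B, C} : Set (EuclideanSpace ℝ (Fin 2))) →
    ∀ O : EuclideanSpace ℝ (Fin 2),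
      dist O A = dist O B → dist O A = dist O C → O ∈ S

/-! Pick a non-collinear triple `A, B, C` in `S`. Circumcenters of `A`, `B` and a third point lie
on the perpendicular bisector `ℓ` of `AB`, so `O₁ = cc(A, B, C)`, `O₂ = cc(A, B, O₁)` and
`O₃ = cc(A, B, O₂)` are points of `S ∩ ℓ`; unless one of them is collinear with `A` and `B`,
they are three distinct points of `ℓ`. The only obstruction is `O₃ = O₁`, where `A O₁ O₂` and
`B O₁ O₂` are equilateral triangles. Then the circumcenter of `A O₁ O₂` lies, like `A` and `B`,
on the perpendicular bisector of `O₁O₂`, and it is not `B` since four points of the plane are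
never pairwise equidistant. -/

section Affine

variable {k V P : Type*} [DivisionRing k] [AddCommGroup V] [Module k V] [AddTorsor V P]

theorem exists_not_collinear_triple_of_not_collinear {s : Set P} (hs : ¬Collinear k s) :
    ∃ A ∈ s, ∃ B ∈ s, ∃ C ∈ s, ¬Collinear k ({A, B, C} : Set P) := by
  obtain ⟨A, hA⟩ : s.Nonempty := Set.nonempty_iff_ne_empty.2 fun h => hs (h ▸ collinear_empty k P)
  obtain ⟨B, hB, hBA⟩ : ∃ B ∈ s, B ≠ A := by
    by_contra! h
    exact hs ((collinear_singleton k A).subset h)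
  refine ⟨A, hA, B, hB, ?_⟩
  by_contra! h
  refine hs ((collinear_iff_of_mem hA).2 ⟨B -ᵥ A, fun p hp => ?_⟩)
  have hp : p ∈ line[k, A, B] :=
    (h p hp).mem_affineSpan_of_mem_of_ne (by simp) (by simp) (by simp) hBA.symm
  rw [← vsub_vadd p A, vadd_left_mem_affineSpan_pair] at hp
  obtain ⟨r, hr⟩ := hp
  exact ⟨r, by rw [hr, vsub_vadd]⟩

end Affine

section Euclidean

variable {V P : Type*} [NormedAddCommGroup V] [InnerProductSpace ℝ V] [MetricSpace P]
  [NormedAddTorsor V P]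

theorem ne_of_dist_eq_dist {O A B : P} (h : dist O A = dist O B) (hAB : A ≠ B) : O ≠ A := by
  rintro rfl
  exact hAB (dist_eq_zero.1 (h.symm.trans (dist_self O)))

theorem exists_dist_eq_dist_eq_of_not_collinear {A B C : P}
    (h : ¬Collinear ℝ ({A, B, C} : Set P)) :
    ∃ O : P, dist O A = dist O B ∧ dist O A = dist O C := by
  let T : Affine.Simplex ℝ P 2 := ⟨![A, B, C], affineIndependent_iff_not_collinear_set.2 h⟩
  have hT (i : Fin 3) : dist T.circumcenter (![A, B, C] i) = T.circumradius :=
    T.dist_circumcenter_eq_circumradius' i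
  exact ⟨T.circumcenter, (hT 0).trans (hT 1).symm, (hT 0).trans (hT 2).symm⟩

variable [FiniteDimensional ℝ V]

theorem collinear_of_forall_dist_eq_dist (hV : Module.finrank ℝ V = 2) {A B : P} (hAB : A ≠ B)
    {s : Set P} (hs : ∀ X ∈ s, dist X A = dist X B) : Collinear ℝ s := by
  have : Fact (Module.finrank ℝ V = 1 + 1) := ⟨hV⟩
  have hsub : s ⊆ AffineSubspace.perpBisector A B := fun X hX =>
    AffineSubspace.mem_perpBisector_iff_dist_eq.2 (hs X hX)
  rw [collinear_iff_finrank_le_one]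
  calc Module.finrank ℝ (vectorSpan ℝ s)
      ≤ Module.finrank ℝ (AffineSubspace.perpBisector A B).direction := by
          rw [AffineSubspace.direction_eq_vectorSpan]
          exact Submodule.finrank_mono (vectorSpan_mono ℝ hsub)
    _ = 1 := by
        rw [AffineSubspace.direction_perpBisector,
          Submodule.finrank_orthogonal_span_singleton (n := 1) (vsub_ne_zero.2 hAB.symm)]

theorem eq_of_four_pairwise_dist_eq (hV : Module.finrank ℝ V = 2) {A B C D : P}
    (hAC : dist A C = dist A B) (hAD : dist A D = dist A B) (hBC : dist B C = dist A B)
    (hBD : dist B D = dist A B) (hCD : dist C D = dist A B) : A = B := by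
  by_contra hAB
  set c := dist A B
  have hc : c ^ 2 ≠ 0 := pow_ne_zero 2 (dist_ne_zero.2 hAB)
  set v : Fin 3 → V := ![B -ᵥ A, C -ᵥ A, D -ᵥ A]
  have hnorm (i : Fin 3) : ‖v i‖ = c := by
    fin_cases i <;> simp [v, ← dist_eq_norm_vsub, dist_comm, hAC, hAD, c]
  have hdiff (i j : Fin 3) (hij : i ≠ j) : ‖v i - v j‖ = c := by
    fin_cases i <;> fin_cases j <;> simp_all [v, ← dist_eq_norm_vsub, dist_comm, c]
  -- the Gram matrix `c² (I + J) / 2` of `v` is nonsingular, but `v` is dependent in a plane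
  have hinner (i j : Fin 3) : inner ℝ (v i) (v j) = if i = j then c ^ 2 else c ^ 2 / 2 := by
    split_ifs with hij
    · rw [hij, real_inner_self_eq_norm_sq, hnorm]
    · have := norm_sub_sq_real (v i) (v j)
      rw [hdiff i j hij, hnorm, hnorm] at this
      linarith
  obtain ⟨g, hg, i, hi⟩ := Fintype.not_linearIndependent_iff.1 fun hli : LinearIndependent ℝ v =>
    by simpa [hV] using hli.fintype_card_le_finrank
  have hgv (j : Fin 3) : ∑ i, g i * inner ℝ (v i) (v j) = 0 := by
    simp_rw [← real_inner_smul_left, ← sum_inner, hg, inner_zero_left]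
  simp only [Fin.sum_univ_three, hinner] at hgv
  have h0 := hgv 0; have h1 := hgv 1; have h2 := hgv 2
  simp only [Fin.isValue, if_true, Fin.reduceEq, if_false] at h0 h1 h2
  have e0 : 2 * g 0 + g 1 + g 2 = 0 :=
    (mul_eq_zero.1 (show c ^ 2 * (2 * g 0 + g 1 + g 2) = 0 by linarith)).resolve_left hc
  have e1 : g 0 + 2 * g 1 + g 2 = 0 :=
    (mul_eq_zero.1 (show c ^ 2 * (g 0 + 2 * g 1 + g 2) = 0 by linarith)).resolve_left hc
  have e2 : g 0 + g 1 + 2 * g 2 = 0 :=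
    (mul_eq_zero.1 (show c ^ 2 * (g 0 + g 1 + 2 * g 2) = 0 by linarith)).resolve_left hc
  fin_cases i <;> exact hi (by simp only [Fin.zero_eta, Fin.mk_one, Fin.reduceFinMk]; linarith)

end Euclidean

section Plane

local notation "ℝ²" => EuclideanSpace ℝ (Fin 2)

def HasCollinearTriple (S : Set ℝ²) : Prop :=
  ∃ A ∈ S, ∃ B ∈ S, ∃ C ∈ S, A ≠ B ∧ A ≠ C ∧ B ≠ C ∧ Collinear ℝ ({A, B, C} : Set ℝ²)

variable {S : Set ℝ²} {A B C O O₁ O₂ : ℝ²}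

theorem HasCollinearTriple.of_dist_eq_dist (hA : A ∈ S) (hB : B ∈ S) (hO : O ∈ S) (hAB : A ≠ B)
    (hOAB : dist O A = dist O B) (h : Collinear ℝ ({A, B, O} : Set ℝ²)) :
    HasCollinearTriple S :=
  ⟨A, hA, B, hB, O, hO, hAB, (ne_of_dist_eq_dist hOAB hAB).symm,
    (ne_of_dist_eq_dist hOAB.symm hAB.symm).symm, h⟩

theorem ContainsCircleCenters.exists_mem (hS : ContainsCircleCenters S) (hA : A ∈ S) (hB : B ∈ S)
    (hC : C ∈ S) (h : ¬Collinear ℝ ({A, B, C} : Set ℝ²)) :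
    ∃ O ∈ S, dist O A = dist O B ∧ dist O A = dist O C :=
  let ⟨O, hOB, hOC⟩ := exists_dist_eq_dist_eq_of_not_collinear h
  ⟨O, hS A hA B hB C hC h O hOB hOC, hOB, hOC⟩

theorem ContainsCircleCenters.hasCollinearTriple_of_equilateral (hS : ContainsCircleCenters S)
    (hA : A ∈ S) (hB : B ∈ S) (hO₁ : O₁ ∈ S) (hO₂ : O₂ ∈ S) (hAB : A ≠ B)
    (h₁ : dist O₁ A = dist O₁ B) (h₂ : dist O₂ A = dist O₂ B)
    (h₁₂ : dist O₁ A = dist O₁ O₂) (h₂₁ : dist O₂ A = dist O₂ O₁) : HasCollinearTriple S := by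
  have hO₁A : O₁ ≠ A := ne_of_dist_eq_dist h₁ hAB
  have hO₂A : O₂ ≠ A := ne_of_dist_eq_dist h₂ hAB
  have hO₁O₂ : O₁ ≠ O₂ := ne_of_dist_eq_dist h₁₂.symm hO₂A
  by_cases hcol : Collinear ℝ ({A, O₁, O₂} : Set ℝ²)
  · exact ⟨A, hA, O₁, hO₁, O₂, hO₂, hO₁A.symm, hO₂A.symm, hO₁O₂, hcol⟩
  obtain ⟨O, hO, hOA₁, hOA₂⟩ := hS.exists_mem hA hO₁ hO₂ hcol
  have hOB : O ≠ B := by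
    rintro rfl
    refine hAB (eq_of_four_pairwise_dist_eq finrank_euclideanSpace_fin (C := O₁) (D := O₂)
      ?_ ?_ ?_ ?_ ?_) <;>
      linarith [dist_comm A O, dist_comm A O₁, dist_comm A O₂, dist_comm O O₁, dist_comm O O₂,
        dist_comm O₁ O₂]
  refine ⟨A, hA, B, hB, O, hO, hAB, (ne_of_dist_eq_dist hOA₁ hO₁A.symm).symm, hOB.symm,
    collinear_of_forall_dist_eq_dist finrank_euclideanSpace_fin hO₁O₂ ?_⟩
  simp only [Set.mem_insert_iff, Set.mem_singleton_iff, forall_eq_or_imp, forall_eq]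
  refine ⟨?_, ?_, hOA₁.symm.trans hOA₂⟩ <;>
    linarith [dist_comm A O₁, dist_comm A O₂, dist_comm B O₁, dist_comm B O₂, dist_comm O₁ O₂]

end Plane

/-- No circle-center set is in general position: a circle-center set always contains
three distinct collinear points. -/
theorem circle_center_set_not_general_position (S : Set (EuclideanSpace ℝ (Fin 2)))
    (hline : ¬ Collinear ℝ S) (hcc : ContainsCircleCenters S) :
    ∃ A ∈ S, ∃ B ∈ S, ∃ C ∈ S,
      A ≠ B ∧ A ≠ C ∧ B ≠ C ∧
      Collinear ℝ ({A, B, C} : Set (EuclideanSpace ℝ (Fin 2))) := by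
  obtain ⟨A, hA, B, hB, C, hC, hABC⟩ := exists_not_collinear_triple_of_not_collinear hline
  have hAB : A ≠ B := ne₁₂_of_not_collinear hABC
  obtain ⟨O₁, hO₁, hO₁AB, -⟩ := hcc.exists_mem hA hB hC hABC
  by_cases h₁ : Collinear ℝ {A, B, O₁}
  · exact HasCollinearTriple.of_dist_eq_dist hA hB hO₁ hAB hO₁AB h₁
  obtain ⟨O₂, hO₂, hO₂AB, hO₂AO₁⟩ := hcc.exists_mem hA hB hO₁ h₁
  by_cases h₂ : Collinear ℝ {A, B, O₂}
  · exact HasCollinearTriple.of_dist_eq_dist hA hB hO₂ hAB hO₂AB h₂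
  obtain ⟨O₃, hO₃, hO₃AB, hO₃AO₂⟩ := hcc.exists_mem hA hB hO₂ h₂
  by_cases h₃ : O₃ = O₁
  · subst h₃
    exact hcc.hasCollinearTriple_of_equilateral hA hB hO₃ hO₂ hAB hO₃AB hO₂AB hO₃AO₂ hO₂AO₁
  have hO₂O₁ : O₂ ≠ O₁ := ne_of_dist_eq_dist hO₂AO₁.symm (ne_of_dist_eq_dist hO₁AB hAB)
  have hO₃O₂ : O₃ ≠ O₂ := ne_of_dist_eq_dist hO₃AO₂.symm (ne_of_dist_eq_dist hO₂AB hAB)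
  refine ⟨O₁, hO₁, O₂, hO₂, O₃, hO₃, hO₂O₁.symm, Ne.symm h₃, hO₃O₂.symm,
    collinear_of_forall_dist_eq_dist finrank_euclideanSpace_fin hAB ?_⟩
  simp only [Set.mem_insert_iff, Set.mem_singleton_iff, forall_eq_or_imp, forall_eq]
  exact ⟨hO₁AB, hO₂AB, hO₃AB⟩
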